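/- arXiv:0902.0175 — 2 statements merged into one kernel-verified Lean document; each statement's English description precedes it below -/
import Mathlib

section
/- Let B be a finite Boolean algebra, M ⊆ B finite, and define p(S) = h(⋁S) for nonempty S ⊆ M. Then for any nonempty A ⊆ M, the function q_A(X) = p(X) − p(X ∪ A), defined for nonempty X ⊆ M \ A, is decreasing and submodular. -/
open Finset

/-- The height of the interval `[x, ⊤]` in a finite Boolean algebra. -/
noncomputable def hgt {B : Type*} [BooleanAlgebra B] [Fintype B] (x : B) : ℕ :=
  Nat.card {c : B // x ≤ c ∧ IsCoatom c}

section Aux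
variable {B : Type*} [BooleanAlgebra B] [Fintype B] [DecidableEq B]

/-- The finset of coatoms above `x`. -/
noncomputable def Ncoat (x : B) : Finset B :=
  @Finset.filter B (fun c => x ≤ c ∧ IsCoatom c) (Classical.decPred _) Finset.univ

lemma mem_Ncoat {x c : B} : c ∈ Ncoat x ↔ x ≤ c ∧ IsCoatom c := by
  classical
  simp [Ncoat]

lemma hgt_eq (x : B) : hgt x = (Ncoat x).card := by
  classical
  rw [hgt, Nat.card_eq_fintype_card, Fintype.card_subtype, Ncoat]
  convert rfl

lemma Ncoat_anti {x y : B} (h : x ≤ y) : Ncoat y ⊆ Ncoat x := by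
  intro c hc
  rw [mem_Ncoat] at *
  exact ⟨h.trans hc.1, hc.2⟩

lemma coatom_compl_le {a c : B} (hc : IsCoatom c) : aᶜ ≤ c ↔ ¬ a ≤ c := by
  constructor
  · intro h ha
    exact hc.1 (top_le_iff.mp (by rw [← sup_compl_eq_top (x := a)]; exact sup_le ha h))
  · intro ha
    have hsup : c ⊔ a = ⊤ := hc.2 _ (lt_of_le_of_ne le_sup_left (by
      intro he; exact ha (le_sup_right.trans he.symm.le)))
    calc aᶜ = aᶜ ⊓ (c ⊔ a) := by rw [hsup, inf_top_eq]
    _ = (aᶜ ⊓ c) ⊔ (aᶜ ⊓ a) := inf_sup_left _ _ _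
    _ ≤ c := by simp

lemma hgt_sub (x a : B) : hgt x - hgt (x ⊔ a) = hgt (x ⊔ aᶜ) := by
  rw [hgt_eq, hgt_eq, hgt_eq, ← Finset.card_sdiff_of_subset (Ncoat_anti le_sup_left)]
  congr 1
  ext c
  simp only [Finset.mem_sdiff, mem_Ncoat, sup_le_iff]
  by_cases hc : IsCoatom c
  · simp only [hc, and_true]
    rw [coatom_compl_le hc]
    tauto
  · tauto

lemma Ncoat_sup (x y : B) : Ncoat (x ⊔ y) = Ncoat x ∩ Ncoat y := by
  ext c
  simp only [Finset.mem_inter, mem_Ncoat, sup_le_iff]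
  tauto

end Aux

/-- For `p(S) = h(⋁S)` on nonempty subsets of a finite `M ⊆ B` and nonempty `A ⊆ M`,
the difference function `q_A(X) = p(X) - p(X ∪ A)` on nonempty subsets of `M \ A` is
decreasing and submodular. -/
theorem diff_profile_decreasing_submodular {B : Type*} [BooleanAlgebra B] [Fintype B]
    [DecidableEq B] (M A : Finset B) (hA : A.Nonempty) (hAM : A ⊆ M) :
    (∀ X Y : Finset B, ∀ hX : X.Nonempty, ∀ hY : Y.Nonempty,
        X ⊆ Y → Y ⊆ M \ A →
        hgt (Y.sup' hY id) - hgt ((Y ∪ A).sup' hY.inl id) ≤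
          hgt (X.sup' hX id) - hgt ((X ∪ A).sup' hX.inl id)) ∧
    (∀ X Y : Finset B, ∀ hX : X.Nonempty, ∀ hY : Y.Nonempty,
        ∀ hXY : (X ∩ Y).Nonempty, X ⊆ M \ A → Y ⊆ M \ A →
        (hgt (X.sup' hX id) - hgt ((X ∪ A).sup' hX.inl id)) +
            (hgt (Y.sup' hY id) - hgt ((Y ∪ A).sup' hY.inl id)) ≤
          (hgt ((X ∪ Y).sup' hX.inl id) - hgt ((X ∪ Y ∪ A).sup' (hX.inl.inl) id)) +
            (hgt ((X ∩ Y).sup' hXY id) - hgt ((X ∩ Y ∪ A).sup' hXY.inl id))) := by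
  set a := A.sup' hA id with ha
  have key : ∀ (X : Finset B) (hX : X.Nonempty),
      hgt (X.sup' hX id) - hgt ((X ∪ A).sup' hX.inl id) =
        (Ncoat (X.sup' hX id ⊔ aᶜ)).card := by
    intro X hX
    rw [Finset.sup'_union hX hA id, ← ha, hgt_sub, hgt_eq]
  constructor
  · intro X Y hX hY hXY _
    rw [key X hX, key Y hY]
    exact Finset.card_le_card (Ncoat_anti
      (sup_le_sup_right (Finset.sup'_mono id hXY hX) _))
  · intro X Y hX hY hXY _ _
    rw [key X hX, key Y hY, key (X ∪ Y) hX.inl, key (X ∩ Y) hXY]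
    set u := X.sup' hX id
    set v := Y.sup' hY id
    have huv : (X ∪ Y).sup' hX.inl id = u ⊔ v := Finset.sup'_union hX hY id
    rw [huv]
    have h1 : Ncoat (u ⊔ v ⊔ aᶜ) = Ncoat (u ⊔ aᶜ) ∩ Ncoat (v ⊔ aᶜ) := by
      rw [← Ncoat_sup]
      congr 1
      rw [sup_sup_sup_comm, sup_idem]
    have h2 : Ncoat (u ⊔ aᶜ) ∪ Ncoat (v ⊔ aᶜ) ⊆ Ncoat ((X ∩ Y).sup' hXY id ⊔ aᶜ) := by
      apply Finset.union_subset
      · exact Ncoat_anti (sup_le_sup_right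
          (Finset.sup'_mono id Finset.inter_subset_left hXY) _)
      · exact Ncoat_anti (sup_le_sup_right
          (Finset.sup'_mono id Finset.inter_subset_right hXY) _)
    calc (Ncoat (u ⊔ aᶜ)).card + (Ncoat (v ⊔ aᶜ)).card
        = (Ncoat (u ⊔ aᶜ) ∪ Ncoat (v ⊔ aᶜ)).card
            + (Ncoat (u ⊔ aᶜ) ∩ Ncoat (v ⊔ aᶜ)).card :=
          (Finset.card_union_add_card_inter _ _).symm
      _ ≤ _ := by
          rw [h1, add_comm]
          exact Nat.add_le_add le_rfl (Finset.card_le_card h2)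
end

section
/- Two finite hypergraphs H₁ = (V₁,E₁) and H₂ = (V₂,E₂) without isolated vertices are isomorphic if and only if there is a bijection φ: E₁ → E₂ such that for every nonempty S ⊆ E₁, |⋂S| = |⋂ φ[S]|. -/
/-!
Let `D(v)` be the set of edges containing the vertex `v` and `n(T)` the number of vertices with
`D(v) = T`. Then `|⋂ S| = ∑_{T ⊇ S} n(T)`, so the intersection profile determines these sums for
every nonempty `S`, and downward induction on `S` (Möbius inversion on the Boolean lattice)
recovers `n(T)` for nonempty `T`; without isolated vertices `n(∅) = 0`. Matching, for each `T`, the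
vertices with `D(v) = T` bijectively with those with `D(w) = φ[T]` gives the isomorphism.
-/

open Finset

theorem eq_of_forall_sum_Ici_eq {α M : Type*} [PartialOrder α] [LocallyFiniteOrderTop α]
    [WellFoundedGT α] [AddCancelCommMonoid M] {f g : α → M} {a : α}
    (h : ∀ b, a ≤ b → ∑ c ∈ Ici b, f c = ∑ c ∈ Ici b, g c) : f a = g a := by
  induction a using WellFoundedGT.induction with
  | _ a ih =>
  have hIoi : ∑ c ∈ Ioi a, f c = ∑ c ∈ Ioi a, g c :=
    sum_congr rfl fun b hb => ih b (mem_Ioi.1 hb) fun c hc => h c ((mem_Ioi.1 hb).le.trans hc)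
  have := h a le_rfl
  rwa [← add_sum_Ioi_eq_sum_Ici, ← add_sum_Ioi_eq_sum_Ici, hIoi, add_left_inj] at this

theorem Finset.card_inf'_map {ι κ V W : Type*} [DecidableEq V] [DecidableEq W] [DecidableEq κ]
    {c : ι → Finset V} {d : κ → Finset W} (φ : ι → κ) (g : V ↪ W)
    (h : ∀ i, d (φ i) = (c i).map g) (S : Finset ι) (hS : S.Nonempty) :
    ((S.image φ).inf' (hS.image φ) d).card = (S.inf' hS c).card := by
  rw [inf'_image, show d ∘ φ = map g ∘ c from funext h,
    ← apply_inf'_eq_inf'_comp hS _ fun _ _ => map_inter .., card_map]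

theorem Finset.eq_image_of_equiv {α β : Type*} [DecidableEq β] {s : Finset α} {t : Finset β}
    (φ : s ≃ t) (f : α → β) (h : ∀ x, (φ x : β) = f x) : t = s.image f := by
  ext b
  refine ⟨fun hb => ?_, fun hb => ?_⟩
  · obtain ⟨a, ha⟩ := φ.surjective ⟨b, hb⟩
    exact mem_image.2 ⟨a, a.2, by rw [← h, ha]⟩
  · obtain ⟨a, ha, rfl⟩ := mem_image.1 hb
    exact h ⟨a, ha⟩ ▸ (φ ⟨a, ha⟩).2

section Incidence

variable {ι V W : Type*} [Fintype ι] [DecidableEq ι] [Fintype V] [Fintype W]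
  [DecidableEq V] [DecidableEq W]

def incidence (c : ι → Finset V) (v : V) : Finset ι := {i | v ∈ c i}

omit [DecidableEq ι] [Fintype V] in
@[simp] theorem mem_incidence {c : ι → Finset V} {v : V} {i : ι} :
    i ∈ incidence c v ↔ v ∈ c i := by
  simp [incidence]

theorem card_inf'_eq_sum_Ici (c : ι → Finset V) (S : Finset ι) (hS : S.Nonempty) :
    (S.inf' hS c).card = ∑ T ∈ Ici S, #{v | incidence c v = T} := by
  have hinf : S.inf' hS c = ({v | S ⊆ incidence c v} : Finset V) := by
    ext v
    simp [mem_inf', subset_iff]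
  rw [hinf, card_eq_sum_card_fiberwise (f := incidence c) (t := Ici S)
    fun v hv => by simpa using hv]
  refine sum_congr rfl fun T hT => ?_
  rw [filter_filter]
  refine congr_arg card (filter_congr fun v _ => ?_)
  exact ⟨And.right, fun hv => ⟨hv ▸ mem_Ici.1 hT, hv⟩⟩

theorem filter_incidence_eq_empty {c : ι → Finset V} (hc : ∀ v, ∃ i, v ∈ c i) :
    ({v | incidence c v = ∅} : Finset V) = ∅ :=
  filter_false_of_mem fun v _ hv => by
    obtain ⟨i, hi⟩ := hc v
    simpa [hv] using mem_incidence.2 hi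

theorem card_filter_incidence_eq_of_card_inf'_eq {c : ι → Finset V} {d : ι → Finset W}
    (h : ∀ (S : Finset ι) (hS : S.Nonempty), (S.inf' hS c).card = (S.inf' hS d).card)
    {T : Finset ι} (hT : T.Nonempty) :
    #{v | incidence c v = T} = #{w | incidence d w = T} :=
  eq_of_forall_sum_Ici_eq (f := fun T => #{v | incidence c v = T})
    (g := fun T => #{w | incidence d w = T}) fun U hTU => by
    rw [← card_inf'_eq_sum_Ici c U (hT.mono hTU), ← card_inf'_eq_sum_Ici, h]

theorem exists_equiv_map_eq_of_card_inf'_eq {c : ι → Finset V} {d : ι → Finset W}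
    (hc : ∀ v, ∃ i, v ∈ c i) (hd : ∀ w, ∃ i, w ∈ d i)
    (h : ∀ (S : Finset ι) (hS : S.Nonempty), (S.inf' hS c).card = (S.inf' hS d).card) :
    ∃ g : V ≃ W, ∀ i, (c i).map g.toEmbedding = d i := by
  have hfiber (T : Finset ι) :
      Nat.card {v // incidence c v = T} = Nat.card {w // incidence d w = T} := by
    simp only [Nat.card_eq_fintype_card, Fintype.card_subtype]
    rcases T.eq_empty_or_nonempty with rfl | hT
    · rw [filter_incidence_eq_empty hc, filter_incidence_eq_empty hd, card_empty, card_empty]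
    · exact card_filter_incidence_eq_of_card_inf'_eq h hT
  let g := Equiv.ofFiberEquiv fun T => (Finite.card_eq.1 (hfiber T)).some
  have hg (v : V) : incidence d (g v) = incidence c v := Equiv.ofFiberEquiv_map _ v
  refine ⟨g, fun i => ext fun w => ?_⟩
  rw [mem_map_equiv, ← mem_incidence (c := c), ← hg, g.apply_symm_apply, mem_incidence]

end Incidence

/-- Two finite hypergraphs without isolated vertices are isomorphic iff there is a
bijection `φ` between their edge sets preserving the cardinalities of all
intersections of nonempty families of edges. -/
theorem hypergraph_iso_iff_profile {V₁ V₂ : Type*} [Fintype V₁] [Fintype V₂]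
    [DecidableEq V₁] [DecidableEq V₂]
    (E₁ : Finset (Finset V₁)) (E₂ : Finset (Finset V₂))
    (hcov₁ : ∀ v : V₁, ∃ e ∈ E₁, v ∈ e) (hcov₂ : ∀ v : V₂, ∃ e ∈ E₂, v ∈ e) :
    (∃ g : V₁ ≃ V₂, E₂ = E₁.image (Finset.image g)) ↔
      (∃ φ : {e // e ∈ E₁} ≃ {e // e ∈ E₂},
        ∀ S : Finset {e // e ∈ E₁}, ∀ hS : S.Nonempty,
          (S.inf' hS (fun e => (e : Finset V₁))).card =
            ((S.image φ).inf' (hS.image φ) (fun e => (e : Finset V₂))).card) := by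
  constructor
  · rintro ⟨g, rfl⟩
    let φ : {e // e ∈ E₁} ≃ {e // e ∈ E₁.image (image g)} :=
      g.finsetCongr.subtypeEquiv fun e => by
        rw [Equiv.finsetCongr_apply, map_eq_image, Equiv.coe_toEmbedding,
          (image_injective g.injective).mem_finset_image]
    exact ⟨φ, fun S hS => (card_inf'_map φ g.toEmbedding (fun _ => rfl) S hS).symm⟩
  · rintro ⟨φ, hφ⟩
    obtain ⟨g, hg⟩ := exists_equiv_map_eq_of_card_inf'_eq
      (c := fun e : {e // e ∈ E₁} => (e : Finset V₁)) (d := fun e => (φ e : Finset V₂))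
      (fun v => let ⟨e, he, hv⟩ := hcov₁ v; ⟨⟨e, he⟩, hv⟩)
      (fun w => let ⟨e, he, hw⟩ := hcov₂ w; ⟨φ.symm ⟨e, he⟩, by simpa using hw⟩)
      (fun S hS => by rw [hφ, inf'_image]; rfl)
    exact ⟨g, eq_image_of_equiv φ _ fun e => by rw [← hg, map_eq_image]; rfl⟩
end
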